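/- arXiv:1706.09029 — 2 statements merged into one kernel-verified Lean document; each statement's English description precedes it below -/
import Mathlib

section
/- Let G be a graph with a minimum 2-factor F whose cycles have at least two members, and suppose G is 2K2-free. Then no cycle of F contains an edge both of whose endpoints are A-type vertices. -/
/-!
Suppose `x y` is an edge of a cycle `C` of the 2-factor, `x` is adjacent to consecutive vertices
`a, a⁺` of a cycle `D₁ ≠ C` and `y` to consecutive vertices `b, b⁺` of a cycle `D₂ ≠ C`.
A Hamiltonian path of `D₁ ∪ D₂` from a neighbour of `x` to a neighbour of `y`, together with the
path `C - xy`, closes a single cycle on `C ∪ D₁ ∪ D₂`, giving a 2-factor with fewer cycles.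
If `D₁ ≠ D₂`, `2K₂`-freeness gives an edge between `{a, a⁺}` and `{b, b⁺}`, and such a path runs
around `D₁` and then around `D₂`. If `D₁ = D₂ = D`, apply `2K₂`-freeness to the edges `y b` and
`a⁻ a`: either `x` and `y` have neighbours consecutive on `D`, or there is a chord `b a⁻` or `b a`
along which `D` is re-routed into such a path.
-/

open SimpleGraph

variable {V : Type*}

/-- `G` has no induced `2K₂`. -/
def TwoK2Free (G : SimpleGraph V) : Prop :=
  ¬ ∃ a b c d : V, a ≠ b ∧ a ≠ c ∧ a ≠ d ∧ b ≠ c ∧ b ≠ d ∧ c ≠ d ∧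
      G.Adj a b ∧ G.Adj c d ∧ ¬G.Adj a c ∧ ¬G.Adj a d ∧ ¬G.Adj b c ∧ ¬G.Adj b d

/-- An independent set of vertices. -/
def IndepSet (G : SimpleGraph V) (s : Set V) : Prop :=
  s.Pairwise fun a b => ¬ G.Adj a b

/-- Number of connected components of `G - S`. -/
noncomputable def compCount [Fintype V] (G : SimpleGraph V) (S : Set V) : ℕ :=
  Nat.card ((G.induce Sᶜ).ConnectedComponent)

/-- `G` is `t`-tough. -/
def Tough [Fintype V] (t : ℝ) (G : SimpleGraph V) : Prop :=
  ∀ S : Set V, 2 ≤ compCount G S → t * (compCount G S : ℝ) ≤ (S.ncard : ℝ)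

/-- A family of `k` pairwise vertex-disjoint cycles in `G` covering all vertices,
i.e. the cycles of a 2-factor of `G`. -/
structure CycleFamily (G : SimpleGraph V) (k : ℕ) (n : Fin k → ℕ)
    (c : ∀ i : Fin k, ZMod (n i) → V) : Prop where
  three_le : ∀ i, 3 ≤ n i
  inj : ∀ i, Function.Injective (c i)
  adj : ∀ i j, G.Adj (c i j) (c i (j + 1))
  disj : ∀ i i' j j', c i j = c i' j' → i = i'
  spanning : ∀ v, ∃ i j, c i j = v

/-- A vertex `v` lying on cycle `i` of the family is of A-type if it is adjacent to two
consecutive vertices of some other cycle of the family. -/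
def AType {k : ℕ} {n : Fin k → ℕ} (G : SimpleGraph V)
    (c : ∀ i : Fin k, ZMod (n i) → V) (i : Fin k) (v : V) : Prop :=
  ∃ i' : Fin k, i' ≠ i ∧ ∃ j : ZMod (n i'), G.Adj v (c i' j) ∧ G.Adj v (c i' (j + 1))

lemma TwoK2Free.exists_adj {G : SimpleGraph V} (h : TwoK2Free G) {a b c d : V}
    (hab : G.Adj a b) (hcd : G.Adj c d) (hac : a ≠ c) (had : a ≠ d) (hbc : b ≠ c)
    (hbd : b ≠ d) : ∃ e ∈ ({a, b} : Set V), ∃ e' ∈ ({c, d} : Set V), G.Adj e e' := by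
  by_contra! hne
  exact h ⟨a, b, c, d, hab.ne, hac, had, hbc, hbd, hcd.ne, hab, hcd, hne a (by simp) c (by simp),
    hne a (by simp) d (by simp), hne b (by simp) c (by simp), hne b (by simp) d (by simp)⟩

structure IsPathOn (G : SimpleGraph V) (s : Set V) (a b : V) (L : List V) : Prop where
  isChain : L.IsChain G.Adj
  nodup : L.Nodup
  head? : L.head? = some a
  getLast? : L.getLast? = some b
  mem_iff : ∀ v, v ∈ L ↔ v ∈ s

structure IsCycleMap (G : SimpleGraph V) {N : ℕ} (f : ZMod N → V) : Prop where
  injective : Function.Injective f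
  adj : ∀ z, G.Adj (f z) (f (z + 1))

namespace IsPathOn

variable {G : SimpleGraph V} {s t : Set V} {a b a' b' : V} {L L' : List V}

lemma reverse (hL : IsPathOn G s a b L) : IsPathOn G s b a L.reverse where
  isChain := List.isChain_reverse.mpr (hL.isChain.imp fun _ _ h => h.symm)
  nodup := List.nodup_reverse.mpr hL.nodup
  head? := by rw [List.head?_reverse, hL.getLast?]
  getLast? := by rw [List.getLast?_reverse, hL.head?]
  mem_iff v := by rw [List.mem_reverse, hL.mem_iff]

lemma append (hL : IsPathOn G s a b L) (hL' : IsPathOn G t a' b' L') (hst : Disjoint s t)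
    (hba' : G.Adj b a') : IsPathOn G (s ∪ t) a b' (L ++ L') where
  isChain := List.isChain_append.mpr
    ⟨hL.isChain, hL'.isChain, by simp [hL.getLast?, hL'.head?, hba']⟩
  nodup := List.nodup_append'.mpr ⟨hL.nodup, hL'.nodup, fun v hv hv' =>
    hst.ne_of_mem ((hL.mem_iff v).mp hv) ((hL'.mem_iff v).mp hv') rfl⟩
  head? := by simp [List.head?_append, hL.head?]
  getLast? := by simp [List.getLast?_append, hL'.getLast?]
  mem_iff v := by rw [List.mem_append, hL.mem_iff, hL'.mem_iff, Set.mem_union]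

lemma ne_nil (hL : IsPathOn G s a b L) : L ≠ [] := by
  rintro rfl
  simpa using hL.head?

lemma exists_isCycleMap (hL : IsPathOn G s a b L) (hba : G.Adj b a) :
    ∃ f : ZMod L.length → V, IsCycleMap G f ∧ Set.range f = s := by
  have hpos : 0 < L.length := List.length_pos_iff.mpr hL.ne_nil
  have : NeZero L.length := ⟨hpos.ne'⟩
  have hlast : L[L.length - 1]'(by omega) = b := by
    simpa [List.getLast?_eq_getElem?, List.getElem?_eq_getElem (by omega : L.length - 1 < L.length)]
      using hL.getLast?
  have hhead : L[0]'hpos = a := by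
    simpa [List.head?_eq_getElem?, List.getElem?_eq_getElem hpos] using hL.head?
  have hval (z : ZMod L.length) : (z + 1).val = (z.val + 1) % L.length := by
    rw [← ZMod.val_natCast, Nat.cast_add, ZMod.natCast_zmod_val, Nat.cast_one]
  refine ⟨fun z => L[z.val]'(ZMod.val_lt z), ⟨fun z z' h => ?_, fun z => ?_⟩, ?_⟩
  · exact ZMod.val_injective _ ((hL.nodup.getElem_inj_iff).mp h)
  · simp only [hval]
    have hz := ZMod.val_lt z
    rcases Nat.lt_or_ge (z.val + 1) L.length with h | h
    · simp only [Nat.mod_eq_of_lt h]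
      exact List.isChain_iff_getElem.mp hL.isChain _ h
    · have hz' : z.val = L.length - 1 := by omega
      simp only [hz', Nat.sub_add_cancel (NeZero.one_le), Nat.mod_self, hlast, hhead, hba]
  · ext v
    rw [← hL.mem_iff, List.mem_iff_getElem]
    constructor
    · rintro ⟨z, rfl⟩
      exact ⟨_, _, rfl⟩
    · rintro ⟨i, hi, rfl⟩
      exact ⟨i, by simp only [ZMod.val_cast_of_lt hi]⟩

end IsPathOn

section Arc

variable {N : ℕ} (f : ZMod N → V)

def arc (a : ZMod N) (m : ℕ) : List V := (List.range m).map fun t : ℕ => f (a + t)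

variable {f}

lemma arc_add (a : ZMod N) (l m : ℕ) : arc f a (l + m) = arc f a l ++ arc f (a + l) m := by
  simp [arc, List.range_add, add_assoc]

lemma head?_arc_succ (a : ZMod N) (m : ℕ) : (arc f a (m + 1)).head? = some (f a) := by
  simp [arc, List.range_succ_eq_map]

lemma getLast?_arc_succ (a : ZMod N) (m : ℕ) :
    (arc f a (m + 1)).getLast? = some (f (a + m)) := by
  simp [arc, List.range_succ]

lemma isChain_arc {G : SimpleGraph V} (hf : ∀ z, G.Adj (f z) (f (z + 1))) (a : ZMod N) (m : ℕ) :
    (arc f a m).IsChain G.Adj := by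
  refine List.isChain_map _ |>.mpr <| (List.isChain_range _ _).mpr fun t _ => ?_
  simpa [add_assoc] using hf (a + t)

lemma nodup_arc (hf : Function.Injective f) (a : ZMod N) : (arc f a N).Nodup := by
  refine List.Nodup.map_on (fun t ht t' ht' h => ?_) List.nodup_range
  rw [List.mem_range] at ht ht'
  have := (ZMod.natCast_eq_natCast_iff' t t' N).mp (add_left_cancel (hf h))
  rwa [Nat.mod_eq_of_lt ht, Nat.mod_eq_of_lt ht'] at this

lemma mem_arc [NeZero N] {v : V} (a : ZMod N) : v ∈ arc f a N ↔ v ∈ Set.range f := by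
  refine ⟨fun hv => ?_, ?_⟩
  · obtain ⟨t, -, rfl⟩ := List.mem_map.mp hv
    exact Set.mem_range_self _
  · rintro ⟨z, rfl⟩
    exact List.mem_map.mpr ⟨(z - a).val, List.mem_range.mpr (ZMod.val_lt _), by simp⟩

end Arc

namespace IsCycleMap

variable {G : SimpleGraph V} {N : ℕ} {f : ZMod N → V} {x y : V}

lemma succ_ne (hf : IsCycleMap G f) (a : ZMod N) : a + 1 ≠ a :=
  fun h => (hf.adj a).ne (congrArg f h.symm)

variable [NeZero N]

/-- Forward from `a` to `s`, across the chord to `a - 1`, then backward to `s + 1`. -/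
lemma exists_isPathOn_of_chord (hf : IsCycleMap G f) {a s : ZMod N} (hsa : s + 1 ≠ a)
    (hchord : G.Adj (f s) (f (a - 1))) : ∃ L, IsPathOn G (Set.range f) (f a) (f (s + 1)) L := by
  set l := (s - a).val
  have hal : a + l = s := by simp [l]
  have hl : l + 1 ≠ N := fun h => hsa <| by
    have : ((l + 1 : ℕ) : ZMod N) = 0 := by rw [h, ZMod.natCast_self]
    push_cast at this
    linear_combination this - hal
  obtain ⟨m, hm⟩ : ∃ m, N = l + 1 + (m + 1) := ⟨N - l - 2, by have := ZMod.val_lt (s - a); omega⟩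
  have hsm : s + 1 + m = a - 1 := by
    have : ((l + 1 + (m + 1) : ℕ) : ZMod N) = 0 := by rw [← hm, ZMod.natCast_self]
    push_cast at this
    linear_combination this - hal
  have hperm : (arc f a (l + 1) ++ (arc f (s + 1) (m + 1)).reverse).Perm (arc f a N) := by
    rw [congrArg (arc f a) hm, arc_add a (l + 1), Nat.cast_add, Nat.cast_one, ← add_assoc, hal]
    exact (List.reverse_perm _).append_left _
  refine ⟨_, ⟨List.isChain_append.mpr ⟨isChain_arc hf.adj _ _, ?_, ?_⟩,
    hperm.nodup_iff.mpr (nodup_arc hf.injective a), ?_, ?_,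
    fun v => (hperm.mem_iff).trans (mem_arc a)⟩⟩
  · exact List.isChain_reverse.mpr ((isChain_arc hf.adj _ _).imp fun _ _ h => h.symm)
  · simpa [getLast?_arc_succ, head?_arc_succ, hal, hsm] using hchord
  · simp [List.head?_append, head?_arc_succ]
  · simp [List.getLast?_append, head?_arc_succ]

lemma exists_isPathOn_succ (hf : IsCycleMap G f) (a : ZMod N) :
    ∃ L, IsPathOn G (Set.range f) (f a) (f (a + 1)) L :=
  hf.exists_isPathOn_of_chord (hf.succ_ne a) (by simpa using (hf.adj (a - 1)).symm)

lemma exists_isPathOn_from_neighbor (hf : IsCycleMap G f) {e : V} {p : ZMod N}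
    (hx : G.Adj x (f p)) (hx' : G.Adj x (f (p + 1))) (he : e ∈ ({f p, f (p + 1)} : Set V)) :
    ∃ u L, G.Adj x u ∧ IsPathOn G (Set.range f) u e L := by
  obtain ⟨L, hL⟩ := hf.exists_isPathOn_succ p
  rcases he with rfl | rfl
  · exact ⟨_, _, hx', hL.reverse⟩
  · exact ⟨_, _, hx, hL⟩

lemma exists_isPathOn_between_neighbors (h2k2 : TwoK2Free G) (hf : IsCycleMap G f)
    (hy : y ∉ Set.range f) {p s : ZMod N}
    (hxp : G.Adj x (f p)) (hxp' : G.Adj x (f (p + 1)))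
    (hys : G.Adj y (f s)) (hys' : G.Adj y (f (s + 1))) :
    ∃ u w L, G.Adj x u ∧ G.Adj w y ∧ IsPathOn G (Set.range f) u w L := by
  by_cases hsp : s = p
  · subst hsp
    obtain ⟨L, hL⟩ := hf.exists_isPathOn_succ s
    exact ⟨_, _, _, hxp, hys'.symm, hL⟩
  by_cases hsp' : s + 1 = p
  · subst hsp'
    obtain ⟨L, hL⟩ := hf.exists_isPathOn_succ s
    exact ⟨_, _, _, hxp, hys.symm, hL.reverse⟩
  have hedge : G.Adj (f (p - 1)) (f p) := by simpa using hf.adj (p - 1)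
  have hne (z : ZMod N) : y ≠ f z := fun h => hy ⟨z, h.symm⟩
  have hs : s ≠ p - 1 := fun h => hsp' (by rw [h, sub_add_cancel])
  obtain ⟨e, rfl | rfl, e', rfl | rfl, h⟩ := h2k2.exists_adj hys hedge (hne _) (hne _)
    (fun h => hs (hf.injective h)) (fun h => hsp (hf.injective h))
  · obtain ⟨L, hL⟩ := hf.exists_isPathOn_succ (p - 1)
    rw [sub_add_cancel] at hL
    exact ⟨_, _, _, hxp, h.symm, hL.reverse⟩
  · obtain ⟨L, hL⟩ := hf.exists_isPathOn_succ p
    exact ⟨_, _, _, hxp', h.symm, hL.reverse⟩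
  · obtain ⟨L, hL⟩ := hf.exists_isPathOn_of_chord hsp' h
    exact ⟨_, _, _, hxp, hys'.symm, hL⟩
  · obtain ⟨L, hL⟩ := hf.exists_isPathOn_of_chord (a := p + 1) (by simpa using hsp)
      (by simpa using h)
    exact ⟨_, _, _, hxp', hys'.symm, hL⟩

lemma exists_isPathOn_union_between_neighbors {N₁ N₂ : ℕ} [NeZero N₁] [NeZero N₂]
    {f₁ : ZMod N₁ → V} {f₂ : ZMod N₂ → V} (h2k2 : TwoK2Free G)
    (hf₁ : IsCycleMap G f₁) (hf₂ : IsCycleMap G f₂)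
    (hdisj : Disjoint (Set.range f₁) (Set.range f₂)) {p : ZMod N₁} {s : ZMod N₂}
    (hxp : G.Adj x (f₁ p)) (hxp' : G.Adj x (f₁ (p + 1)))
    (hys : G.Adj y (f₂ s)) (hys' : G.Adj y (f₂ (s + 1))) :
    ∃ u w L, G.Adj x u ∧ G.Adj w y ∧ IsPathOn G (Set.range f₁ ∪ Set.range f₂) u w L := by
  have hne (z₁ : ZMod N₁) (z₂ : ZMod N₂) : f₁ z₁ ≠ f₂ z₂ :=
    hdisj.ne_of_mem (Set.mem_range_self _) (Set.mem_range_self _)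
  obtain ⟨e₁, he₁, e₂, he₂, h⟩ :=
    h2k2.exists_adj (hf₁.adj p) (hf₂.adj s) (hne _ _) (hne _ _) (hne _ _) (hne _ _)
  obtain ⟨u, L₁, hxu, hL₁⟩ := hf₁.exists_isPathOn_from_neighbor hxp hxp' he₁
  obtain ⟨w, L₂, hyw, hL₂⟩ := hf₂.exists_isPathOn_from_neighbor hys hys' he₂
  exact ⟨u, w, _, hxu, hyw.symm, hL₁.append hL₂.reverse hdisj h⟩

end IsCycleMap

namespace CycleFamily

variable {G : SimpleGraph V} {k : ℕ} {n : Fin k → ℕ} {c : ∀ i : Fin k, ZMod (n i) → V}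

lemma neZero (hF : CycleFamily G k n c) (i : Fin k) : NeZero (n i) :=
  ⟨by have := hF.three_le i; omega⟩

lemma isCycleMap (hF : CycleFamily G k n c) (i : Fin k) : IsCycleMap G (c i) :=
  ⟨hF.inj i, hF.adj i⟩

lemma disjoint_range (hF : CycleFamily G k n c) {i i' : Fin k} (h : i ≠ i') :
    Disjoint (Set.range (c i)) (Set.range (c i')) :=
  Set.disjoint_left.mpr fun _ ⟨_, hj⟩ ⟨_, hj'⟩ => h (hF.disj _ _ _ _ (hj.trans hj'.symm))

lemma mem_biUnion_range_iff (hF : CycleFamily G k n c) {S : Finset (Fin k)} {i : Fin k}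
    {j : ZMod (n i)} : c i j ∈ ⋃ i' ∈ S, Set.range (c i') ↔ i ∈ S := by
  simp only [Set.mem_iUnion, Set.mem_range, exists_prop]
  exact ⟨fun ⟨i', hi', j', hj'⟩ => hF.disj _ _ _ _ hj' ▸ hi', fun hi => ⟨i, hi, j, rfl⟩⟩

lemma exists_replace (hF : CycleFamily G k n c) (S : Finset (Fin k)) {N : ℕ} (hN : 3 ≤ N)
    {f : ZMod N → V} (hf : IsCycleMap G f) (hrange : Set.range f = ⋃ i ∈ S, Set.range (c i)) :
    ∃ (n' : Fin (Sᶜ.card + 1) → ℕ) (c' : ∀ i, ZMod (n' i) → V),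
      CycleFamily G (Sᶜ.card + 1) n' c' := by
  classical
  set e : Fin Sᶜ.card ≃ {i // i ∈ Sᶜ} := Sᶜ.equivFin.symm
  set n' : Fin (Sᶜ.card + 1) → ℕ := Fin.cons N fun t => n (e t)
  set c' : ∀ i, ZMod (n' i) → V := Fin.cons (α := fun i => ZMod (n' i) → V) f fun t => c (e t)
  have hf_ne (t : Fin Sᶜ.card) (z : ZMod N) (j : ZMod (n (e t))) : f z ≠ c (e t) j := by
    intro h
    have : c (e t) j ∈ Set.range f := ⟨z, h⟩
    rw [hrange, hF.mem_biUnion_range_iff] at this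
    exact Finset.mem_compl.mp (e t).2 this
  refine ⟨n', c', ⟨fun i => ?_, fun i => ?_, fun i => ?_, fun i i' => ?_, fun v => ?_⟩⟩
  · exact Fin.cases hN (fun t => hF.three_le _) i
  · exact Fin.cases hf.injective (fun t => hF.inj _) i
  · exact Fin.cases hf.adj (fun t => hF.adj _) i
  · refine Fin.cases (Fin.cases ?_ (fun t => ?_) i') (fun t => Fin.cases ?_ (fun t' => ?_) i') i
    · exact fun _ _ _ => rfl
    · exact fun z j h => absurd h (hf_ne t z j)
    · exact fun j z h => absurd h.symm (hf_ne t z j)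
    · exact fun _ _ h => congrArg Fin.succ (e.injective (Subtype.ext (hF.disj _ _ _ _ h)))
  · obtain ⟨i, j, rfl⟩ := hF.spanning v
    by_cases hi : i ∈ S
    · obtain ⟨z, hz⟩ : c i j ∈ Set.range f := by rwa [hrange, hF.mem_biUnion_range_iff]
      exact ⟨0, z, hz⟩
    · obtain ⟨t, ht⟩ := e.surjective ⟨i, Finset.mem_compl.mpr hi⟩
      obtain rfl : (e t).1 = i := congrArg Subtype.val ht
      exact ⟨t.succ, j, rfl⟩

lemma card_le_one_of_isPathOn (hF : CycleFamily G k n c)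
    (hmin : ∀ (k' : ℕ) (n' : Fin k' → ℕ) (c' : ∀ i : Fin k', ZMod (n' i) → V),
      CycleFamily G k' n' c' → k ≤ k')
    {S : Finset (Fin k)} {a b : V} {L : List V}
    (hL : IsPathOn G (⋃ i ∈ S, Set.range (c i)) a b L) (hba : G.Adj b a) : S.card ≤ 1 := by
  classical
  obtain rfl | ⟨i, hi⟩ := S.eq_empty_or_nonempty
  · simp
  have := hF.neZero i
  have hlen : n i ≤ L.length := by
    rw [← List.toFinset_card_of_nodup hL.nodup, ← ZMod.card (n i), ← Finset.card_univ,
      ← Finset.card_image_of_injective _ (hF.inj i)]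
    refine Finset.card_le_card fun v hv => ?_
    obtain ⟨j, -, rfl⟩ := Finset.mem_image.mp hv
    exact List.mem_toFinset.mpr ((hL.mem_iff _).mpr (hF.mem_biUnion_range_iff.mpr hi))
  obtain ⟨f, hf, hrange⟩ := hL.exists_isCycleMap hba
  obtain ⟨n', c', hF'⟩ := hF.exists_replace S ((hF.three_le i).trans hlen) hf hrange
  have hk := hmin _ _ _ hF'
  have hS := S.card_le_univ
  rw [Finset.card_compl, Fintype.card_fin] at hk
  rw [Fintype.card_fin] at hS
  omega

end CycleFamily

theorem no_atype_edge_general (G : SimpleGraph V) (h2k2 : TwoK2Free G)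
    (k : ℕ) (n : Fin k → ℕ) (c : ∀ i : Fin k, ZMod (n i) → V)
    (hF : CycleFamily G k n c)
    (hmin : ∀ (k' : ℕ) (n' : Fin k' → ℕ) (c' : ∀ i : Fin k', ZMod (n' i) → V),
      CycleFamily G k' n' c' → k ≤ k') :
    ∀ (i : Fin k) (j : ZMod (n i)),
      ¬ (AType G c i (c i j) ∧ AType G c i (c i (j + 1))) := by
  rintro i j ⟨⟨d₁, hd₁, p, hxp, hxp'⟩, d₂, hd₂, s, hys, hys'⟩
  have := hF.neZero i
  have := hF.neZero d₁
  have := hF.neZero d₂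
  obtain ⟨u, w, L, hxu, hwy, hL⟩ : ∃ u w L, G.Adj (c i j) u ∧ G.Adj w (c i (j + 1)) ∧
      IsPathOn G (⋃ d ∈ ({d₁, d₂} : Finset (Fin k)), Set.range (c d)) u w L := by
    rcases eq_or_ne d₁ d₂ with rfl | hd
    · simpa using (hF.isCycleMap d₁).exists_isPathOn_between_neighbors h2k2
        (Set.disjoint_right.mp (hF.disjoint_range hd₁) (Set.mem_range_self _)) hxp hxp' hys hys'
    · simpa using (hF.isCycleMap d₁).exists_isPathOn_union_between_neighbors h2k2
        (hF.isCycleMap d₂) (hF.disjoint_range hd) hxp hxp' hys hys'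
  obtain ⟨LC, hLC⟩ := (hF.isCycleMap i).exists_isPathOn_succ j
  have hdisj : Disjoint (Set.range (c i)) (⋃ d ∈ ({d₁, d₂} : Finset (Fin k)), Set.range (c d)) :=
    Set.disjoint_iUnion₂_right.mpr fun d hd => hF.disjoint_range <| by
      simp only [Finset.mem_insert, Finset.mem_singleton] at hd
      rcases hd with rfl | rfl
      exacts [hd₁.symm, hd₂.symm]
  have hcard := hF.card_le_one_of_isPathOn hmin (S := insert i {d₁, d₂})
    (by simpa only [Finset.set_biUnion_insert] using hLC.reverse.append hL hdisj hxu) hwy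
  exact hd₁ (Finset.card_le_one.mp hcard _ (by simp) _ (by simp))

theorem no_atype_edge (G : SimpleGraph V) (h2k2 : TwoK2Free G)
    (k : ℕ) (n : Fin k → ℕ) (c : ∀ i : Fin k, ZMod (n i) → V)
    (hF : CycleFamily G k n c)
    (hmin : ∀ (k' : ℕ) (n' : Fin k' → ℕ) (c' : ∀ i : Fin k', ZMod (n' i) → V),
      CycleFamily G k' n' c' → k ≤ k')
    (hk : 2 ≤ k) :
    ∀ (i : Fin k) (j : ZMod (n i)),
      ¬ (AType G c i (c i j) ∧ AType G c i (c i (j + 1))) :=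
  no_atype_edge_general G h2k2 k n c hF hmin
end

section
/- Let G be a 2K2-free graph and uv an edge of G such that u and v together have at most 2(|V(G)|−1)/3 neighbors (counting u,v themselves among neighbors as appropriate). Then the set of vertices nonadjacent to both u and v is an independent set of size more than |V(G)|/3 − 1, and consequently τ(G) < 2. -/
open SimpleGraph

variable {V : Type*}

/-!
Removing `S = (N(u) ∪ N(v)) \ {u}` leaves `u` together with the common non-neighbours `I` of
`u` and `v`. By `2K₂`-freeness `I` is independent, and `u` has no neighbour in `I`, so `G - S`
has `|I| + 1` components while `|S| = n - |I| - 1`. The degree bound gives `|I| ≥ (n + 2) / 3`,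
hence both `|I| > n / 3 - 1` and `|S| < 2 (|I| + 1)`.
-/

def commonNonNeighborSet (G : SimpleGraph V) (u v : V) : Set V :=
  {w | w ≠ u ∧ w ≠ v ∧ ¬ G.Adj u w ∧ ¬ G.Adj v w}

lemma compl_neighborSet_union_eq_commonNonNeighborSet {G : SimpleGraph V} {u v : V}
    (huv : G.Adj u v) :
    (G.neighborSet u ∪ G.neighborSet v)ᶜ = commonNonNeighborSet G u v := by
  ext w
  simp only [commonNonNeighborSet, Set.mem_compl_iff, Set.mem_union, mem_neighborSet, not_or,
    Set.mem_ofPred_eq]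
  constructor
  · rintro ⟨hu, hv⟩
    exact ⟨fun h => hv (h ▸ huv.symm), fun h => hu (h ▸ huv), hu, hv⟩
  · rintro ⟨-, -, hu, hv⟩
    exact ⟨hu, hv⟩

lemma TwoK2Free.indepSet_commonNonNeighborSet {G : SimpleGraph V} (h : TwoK2Free G)
    {u v : V} (huv : G.Adj u v) : IndepSet G (commonNonNeighborSet G u v) := by
  rintro a ⟨hau, hav, hua, hva⟩ b ⟨hbu, hbv, hub, hvb⟩ hab hadj
  exact h ⟨u, v, a, b, huv.ne, Ne.symm hau, Ne.symm hbu, Ne.symm hav, Ne.symm hbv, hab,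
    huv, hadj, hua, hub, hva, hvb⟩

lemma IndepSet.insert {G : SimpleGraph V} {s : Set V} {u : V} (hs : IndepSet G s)
    (hu : ∀ w ∈ s, ¬ G.Adj u w) : IndepSet G (insert u s) :=
  Set.pairwise_insert.2 ⟨hs, fun w hw _ => ⟨hu w hw, fun h => hu w hw h.symm⟩⟩

lemma compCount_eq_ncard_compl_of_indepSet [Fintype V] {G : SimpleGraph V} {S : Set V}
    (hS : IndepSet G Sᶜ) : compCount G S = Sᶜ.ncard := by
  rw [compCount, ← Nat.card_coe_set_eq]
  refine (Nat.card_eq_of_bijective (G.induce Sᶜ).connectedComponentMk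
    ⟨fun a b hab => ?_, Quot.exists_rep⟩).symm
  obtain ⟨w⟩ := ConnectedComponent.eq.mp hab
  cases w with
  | nil => rfl
  | cons hadj _ => exact absurd hadj (hS a.2 (Subtype.prop _) (G.ne_of_adj hadj))

lemma not_tough_of_indepSet_compl [Fintype V] {G : SimpleGraph V} {S : Set V} {t : ℝ}
    (hS : IndepSet G Sᶜ) (htwo : 2 ≤ Sᶜ.ncard) (hlt : (S.ncard : ℝ) < t * Sᶜ.ncard) :
    ¬ Tough t G := fun hT => by
  have := hT S (by rwa [compCount_eq_ncard_compl_of_indepSet hS])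
  rw [compCount_eq_ncard_compl_of_indepSet hS] at this
  linarith

theorem edge_few_neighbors_tough_lt_two [Fintype V] (G : SimpleGraph V)
    (h2k2 : TwoK2Free G) (u v : V) (huv : G.Adj u v)
    (hnb : ((G.neighborSet u ∪ G.neighborSet v).ncard : ℝ) ≤
      2 * ((Fintype.card V : ℝ) - 1) / 3) :
    IndepSet G {w | w ≠ u ∧ w ≠ v ∧ ¬ G.Adj u w ∧ ¬ G.Adj v w} ∧
      (Fintype.card V : ℝ) / 3 - 1 <
        (({w | w ≠ u ∧ w ≠ v ∧ ¬ G.Adj u w ∧ ¬ G.Adj v w} : Set V).ncard : ℝ) ∧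
      ¬ Tough 2 G := by
  set N := G.neighborSet u ∪ G.neighborSet v
  set I := commonNonNeighborSet G u v
  have hNc : Nᶜ = I := compl_neighborSet_union_eq_commonNonNeighborSet huv
  have hI : IndepSet G I := h2k2.indepSet_commonNonNeighborSet huv
  have hcard : (I.ncard : ℝ) + N.ncard = Fintype.card V := by
    rw [← hNc, add_comm, ← Nat.card_eq_fintype_card]
    exact_mod_cast Set.ncard_add_ncard_compl N
  have hN : ((N \ {u}).ncard : ℝ) + 1 = N.ncard := by
    exact_mod_cast Set.ncard_sdiff_singleton_add_one (show u ∈ N from Or.inr huv.symm)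
  have hSc : (N \ {u})ᶜ = insert u I := by rw [Set.compl_sdiff, Set.singleton_union, hNc]
  have hSc_card : (N \ {u})ᶜ.ncard = I.ncard + 1 := by
    rw [hSc, Set.ncard_insert_of_notMem fun h => h.1 rfl]
  have hcard_pos : (1 : ℝ) ≤ Fintype.card V := by
    have : Nonempty V := ⟨u⟩
    exact_mod_cast Fintype.card_pos
  have hI_large : ((Fintype.card V : ℝ) + 2) / 3 ≤ I.ncard := by linarith
  show IndepSet G I ∧ (Fintype.card V : ℝ) / 3 - 1 < I.ncard ∧ ¬ Tough 2 G
  refine ⟨hI, by linarith, not_tough_of_indepSet_compl (hSc ▸ hI.insert fun _ hw => hw.2.2.1)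
    ?_ ?_⟩
  · have : 1 ≤ I.ncard := by exact_mod_cast (by linarith : (1 : ℝ) ≤ I.ncard)
    omega
  · rw [hSc_card]
    push_cast
    linarith
end
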